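/- First step of solution filtering: if Ā ∈ R_{p×r}(F₀), B̄ ∈ R_{p×q}(F₀), and X̄ ∈ M_{r×q}(F) satisfy Ā·X̄ = B̄, and X̄ = X̄₁ + X̄₂ is the direct-sum decomposition with X̄₁ ∈ R_{r×q}(F) and X̄₂ ∈ I_{r×q}(F), then Ā·X̄₁ = B̄ (and consequently Ā·X̄₂ = 0). -/
import Mathlib


open Matrix Kronecker MvPolynomial

set_option maxHeartbeats 1600000
set_option synthInstance.maxHeartbeats 1000000

noncomputable section

/-- The nine matrices of the matrix basis; index `j : Fin 9` is `J_{j+1}`. -/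
def Jm {R : Type*} [CommRing R] (kx ky i : R) : Fin 9 → Matrix (Fin 3) (Fin 3) R :=
  ![!![1,0,0; 0,1,0; 0,0,0],
    !![0,0,0; 0,0,0; 0,0,1],
    !![0,0,i*kx; 0,0,i*ky; 0,0,0],
    !![0,0,0; 0,0,0; i*kx,i*ky,0],
    !![-kx^2,-(kx*ky),0; -(kx*ky),-ky^2,0; 0,0,0],
    !![0,0,0; 0,0,0; -(i*ky),i*kx,0],
    !![0,0,i*ky; 0,0,-(i*kx); 0,0,0],
    !![kx*ky,ky^2,0; -kx^2,-(kx*ky),0; 0,0,0],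
    !![0,1,0; -1,0,0; 0,0,0]]

/-- The field `F = ℂ(kx, ky)` of rational functions in two indeterminates. -/
abbrev Fld : Type := FractionRing (MvPolynomial (Fin 2) ℂ)

def kxF : Fld := algebraMap (MvPolynomial (Fin 2) ℂ) Fld (X 0)
def kyF : Fld := algebraMap (MvPolynomial (Fin 2) ℂ) Fld (X 1)
def iF : Fld := algebraMap (MvPolynomial (Fin 2) ℂ) Fld (C Complex.I)

/-- `R_{p×q}(K)` for a subfield `K ⊆ F`. -/
def inBlockR (K : Subfield Fld) {p q : ℕ}
    (M : Matrix (Fin p × Fin 3) (Fin q × Fin 3) Fld) : Prop :=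
  ∃ Ks : Fin 5 → Matrix (Fin p) (Fin q) Fld,
    (∀ j u v, Ks j u v ∈ K) ∧
    M = ∑ j : Fin 5, (Ks j) ⊗ₖ Jm kxF kyF iF (Fin.castLE (by norm_num) j)

/-- `R_{p×q}(F)` with coefficients in the whole field `F`. -/
def inBlockRF {p q : ℕ}
    (M : Matrix (Fin p × Fin 3) (Fin q × Fin 3) Fld) : Prop :=
  ∃ Ks : Fin 5 → Matrix (Fin p) (Fin q) Fld,
    M = ∑ j : Fin 5, (Ks j) ⊗ₖ Jm kxF kyF iF (Fin.castLE (by norm_num) j)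

/-- `I_{p×q}(F)` with coefficients in the whole field `F`. -/
def inBlockIF {p q : ℕ}
    (M : Matrix (Fin p × Fin 3) (Fin q × Fin 3) Fld) : Prop :=
  ∃ Ks : Fin 4 → Matrix (Fin p) (Fin q) Fld,
    M = ∑ j : Fin 4, (Ks j) ⊗ₖ Jm kxF kyF iF (⟨5 + (j : ℕ), by omega⟩ : Fin 9)

/-! ### Auxiliary machinery: conjugation by the reflection that fixes `k` and negates `k⊥`. -/

/-- `ρ² · S` where `S` is the reflection fixing `(kx,ky,0)ᵀ` and `e₃`, negating `(-ky,kx,0)ᵀ`. -/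
def Sm {R : Type*} [CommRing R] (kx ky : R) : Matrix (Fin 3) (Fin 3) R :=
  !![kx^2-ky^2, 2*(kx*ky), 0; 2*(kx*ky), ky^2-kx^2, 0; 0, 0, kx^2+ky^2]

section conj
variable {R : Type*} [CommRing R] (kx ky i : R)

lemma Sm_sq : Sm kx ky * Sm kx ky = ((kx^2+ky^2)^2) • 1 := by
  ext a b
  fin_cases a <;> fin_cases b <;>
    simp [Sm, Matrix.mul_apply, Fin.sum_univ_three, Matrix.smul_apply,
      Matrix.one_apply, Matrix.vecHead, Matrix.vecTail] <;> ring

lemma conj1 : Sm kx ky * !![(1:R),0,0; 0,1,0; 0,0,0] * Sm kx ky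
    = ((kx^2+ky^2)^2) • !![(1:R),0,0; 0,1,0; 0,0,0] := by
  ext a b
  fin_cases a <;> fin_cases b <;>
    simp [Sm, Matrix.mul_apply, Fin.sum_univ_three, Matrix.smul_apply,
      Matrix.vecHead, Matrix.vecTail] <;> ring

lemma conj2 : Sm kx ky * !![(0:R),0,0; 0,0,0; 0,0,1] * Sm kx ky
    = ((kx^2+ky^2)^2) • !![(0:R),0,0; 0,0,0; 0,0,1] := by
  ext a b
  fin_cases a <;> fin_cases b <;>
    simp [Sm, Matrix.mul_apply, Fin.sum_univ_three, Matrix.smul_apply,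
      Matrix.vecHead, Matrix.vecTail] <;> ring

lemma conj3 : Sm kx ky * !![0,0,i*kx; 0,0,i*ky; 0,0,0] * Sm kx ky
    = ((kx^2+ky^2)^2) • !![0,0,i*kx; 0,0,i*ky; 0,0,0] := by
  ext a b
  fin_cases a <;> fin_cases b <;>
    simp [Sm, Matrix.mul_apply, Fin.sum_univ_three, Matrix.smul_apply,
      Matrix.vecHead, Matrix.vecTail] <;> ring

lemma conj4 : Sm kx ky * !![0,0,0; 0,0,0; i*kx,i*ky,0] * Sm kx ky
    = ((kx^2+ky^2)^2) • !![0,0,0; 0,0,0; i*kx,i*ky,0] := by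
  ext a b
  fin_cases a <;> fin_cases b <;>
    simp [Sm, Matrix.mul_apply, Fin.sum_univ_three, Matrix.smul_apply,
      Matrix.vecHead, Matrix.vecTail] <;> ring

lemma conj5 : Sm kx ky * !![-kx^2,-(kx*ky),0; -(kx*ky),-ky^2,0; 0,0,0] * Sm kx ky
    = ((kx^2+ky^2)^2) • !![-kx^2,-(kx*ky),0; -(kx*ky),-ky^2,0; 0,0,0] := by
  ext a b
  fin_cases a <;> fin_cases b <;>
    simp [Sm, Matrix.mul_apply, Fin.sum_univ_three, Matrix.smul_apply,
      Matrix.vecHead, Matrix.vecTail] <;> ring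

lemma conj6 : Sm kx ky * !![0,0,0; 0,0,0; -(i*ky),i*kx,0] * Sm kx ky
    = (-(kx^2+ky^2)^2) • !![0,0,0; 0,0,0; -(i*ky),i*kx,0] := by
  ext a b
  fin_cases a <;> fin_cases b <;>
    simp [Sm, Matrix.mul_apply, Fin.sum_univ_three, Matrix.smul_apply,
      Matrix.vecHead, Matrix.vecTail] <;> ring

lemma conj7 : Sm kx ky * !![0,0,i*ky; 0,0,-(i*kx); 0,0,0] * Sm kx ky
    = (-(kx^2+ky^2)^2) • !![0,0,i*ky; 0,0,-(i*kx); 0,0,0] := by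
  ext a b
  fin_cases a <;> fin_cases b <;>
    simp [Sm, Matrix.mul_apply, Fin.sum_univ_three, Matrix.smul_apply,
      Matrix.vecHead, Matrix.vecTail] <;> ring

lemma conj8 : Sm kx ky * !![kx*ky,ky^2,0; -kx^2,-(kx*ky),0; 0,0,0] * Sm kx ky
    = (-(kx^2+ky^2)^2) • !![kx*ky,ky^2,0; -kx^2,-(kx*ky),0; 0,0,0] := by
  ext a b
  fin_cases a <;> fin_cases b <;>
    simp [Sm, Matrix.mul_apply, Fin.sum_univ_three, Matrix.smul_apply,
      Matrix.vecHead, Matrix.vecTail] <;> ring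

lemma conj9 : Sm kx ky * !![(0:R),1,0; -1,0,0; 0,0,0] * Sm kx ky
    = (-(kx^2+ky^2)^2) • !![(0:R),1,0; -1,0,0; 0,0,0] := by
  ext a b
  fin_cases a <;> fin_cases b <;>
    simp [Sm, Matrix.mul_apply, Fin.sum_univ_three, Matrix.smul_apply,
      Matrix.vecHead, Matrix.vecTail] <;> ring

lemma Sm_J_R (j : Fin 5) :
    Sm kx ky * Jm kx ky i (Fin.castLE (by norm_num) j) * Sm kx ky
      = ((kx^2+ky^2)^2) • Jm kx ky i (Fin.castLE (by norm_num) j) := by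
  fin_cases j
  · exact conj1 kx ky
  · exact conj2 kx ky
  · exact conj3 kx ky i
  · exact conj4 kx ky i
  · exact conj5 kx ky

lemma Sm_J_I (j : Fin 4) :
    Sm kx ky * Jm kx ky i (⟨5 + (j : ℕ), by omega⟩ : Fin 9) * Sm kx ky
      = (-(kx^2+ky^2)^2) • Jm kx ky i (⟨5 + (j : ℕ), by omega⟩ : Fin 9) := by
  fin_cases j
  · exact conj6 kx ky i
  · exact conj7 kx ky i
  · exact conj8 kx ky
  · exact conj9 kx ky

end conj

/-- Big conjugator on a `p × 3` index space (generic). -/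
def SLg {K : Type*} [CommRing K] (kx ky : K) (p : ℕ) :
    Matrix (Fin p × Fin 3) (Fin p × Fin 3) K :=
  (1 : Matrix (Fin p) (Fin p) K) ⊗ₖ Sm kx ky

section genericK
variable {K : Type*} [CommRing K] (kx ky i : K)

lemma SLg_sq (p : ℕ) : SLg kx ky p * SLg kx ky p = ((kx^2+ky^2)^2) • 1 := by
  rw [SLg, ← Matrix.mul_kronecker_mul, Sm_sq, one_mul, Matrix.kronecker_smul,
    Matrix.one_kronecker_one]

lemma SLg_conj_R {p q : ℕ} (M : Matrix (Fin p × Fin 3) (Fin q × Fin 3) K)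
    (Ks : Fin 5 → Matrix (Fin p) (Fin q) K)
    (h : M = ∑ j : Fin 5, (Ks j) ⊗ₖ Jm kx ky i (Fin.castLE (by norm_num) j)) :
    SLg kx ky p * M * SLg kx ky q = ((kx^2+ky^2)^2) • M := by
  subst h
  rw [Matrix.mul_sum, Matrix.sum_mul, Finset.smul_sum]
  refine Finset.sum_congr rfl fun j _ => ?_
  rw [SLg, SLg, ← Matrix.mul_kronecker_mul, ← Matrix.mul_kronecker_mul,
    Matrix.one_mul, Matrix.mul_one, Sm_J_R, Matrix.kronecker_smul]

lemma SLg_conj_I {p q : ℕ} (M : Matrix (Fin p × Fin 3) (Fin q × Fin 3) K)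
    (Ks : Fin 4 → Matrix (Fin p) (Fin q) K)
    (h : M = ∑ j : Fin 4, (Ks j) ⊗ₖ Jm kx ky i (⟨5 + (j : ℕ), by omega⟩ : Fin 9)) :
    SLg kx ky p * M * SLg kx ky q = (-(kx^2+ky^2)^2) • M := by
  subst h
  rw [Matrix.mul_sum, Matrix.sum_mul, Finset.smul_sum]
  refine Finset.sum_congr rfl fun j _ => ?_
  rw [SLg, SLg, ← Matrix.mul_kronecker_mul, ← Matrix.mul_kronecker_mul,
    Matrix.one_mul, Matrix.mul_one, Sm_J_I, Matrix.kronecker_smul]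

end genericK

/-- Generic version of the solution-filtering step, over an arbitrary field. -/
theorem generic_filtering {K : Type*} [Field K] (kx ky i : K)
    (hρ : kx^2 + ky^2 ≠ 0) (h2 : (2:K) ≠ 0) {p q r : ℕ}
    (A : Matrix (Fin p × Fin 3) (Fin r × Fin 3) K)
    (X X₁ X₂ : Matrix (Fin r × Fin 3) (Fin q × Fin 3) K)
    (B : Matrix (Fin p × Fin 3) (Fin q × Fin 3) K)
    (KA : Fin 5 → Matrix (Fin p) (Fin r) K)
    (hA : A = ∑ j : Fin 5, (KA j) ⊗ₖ Jm kx ky i (Fin.castLE (by norm_num) j))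
    (KB : Fin 5 → Matrix (Fin p) (Fin q) K)
    (hB : B = ∑ j : Fin 5, (KB j) ⊗ₖ Jm kx ky i (Fin.castLE (by norm_num) j))
    (hX : X = X₁ + X₂)
    (K1 : Fin 5 → Matrix (Fin r) (Fin q) K)
    (hX₁ : X₁ = ∑ j : Fin 5, (K1 j) ⊗ₖ Jm kx ky i (Fin.castLE (by norm_num) j))
    (K2 : Fin 4 → Matrix (Fin r) (Fin q) K)
    (hX₂ : X₂ = ∑ j : Fin 4, (K2 j) ⊗ₖ Jm kx ky i (⟨5 + (j : ℕ), by omega⟩ : Fin 9))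
    (hAXB : A * X = B) :
    A * X₁ = B ∧ A * X₂ = 0 := by
  set c : K := (kx^2 + ky^2)^2 with hc
  have hcne : c ≠ 0 := pow_ne_zero _ hρ
  have hA' : SLg kx ky p * A * SLg kx ky r = c • A := SLg_conj_R kx ky i A KA hA
  have hB' : SLg kx ky p * B * SLg kx ky q = c • B := SLg_conj_R kx ky i B KB hB
  have h1 : SLg kx ky r * X₁ * SLg kx ky q = c • X₁ := SLg_conj_R kx ky i X₁ K1 hX₁
  have h2' : SLg kx ky r * X₂ * SLg kx ky q = (-c) • X₂ := SLg_conj_I kx ky i X₂ K2 hX₂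
  have key : c • (c • B) = (c • A) * (c • X₁ + (-c) • X₂) := by
    calc c • (c • B) = c • (SLg kx ky p * B * SLg kx ky q) := by rw [hB']
    _ = c • (SLg kx ky p * (A * X) * SLg kx ky q) := by rw [hAXB]
    _ = SLg kx ky p * A * (c • (1 : Matrix (Fin r × Fin 3) (Fin r × Fin 3) K)) * X
        * SLg kx ky q := by
        rw [Matrix.mul_smul, Matrix.smul_mul, Matrix.smul_mul, Matrix.mul_one]
        rw [Matrix.mul_assoc (SLg kx ky p) A X]
    _ = (SLg kx ky p * A * SLg kx ky r) * (SLg kx ky r * X * SLg kx ky q) := by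
        rw [← SLg_sq kx ky r]
        simp only [Matrix.mul_assoc]
    _ = (c • A) * (SLg kx ky r * X₁ * SLg kx ky q + SLg kx ky r * X₂ * SLg kx ky q) := by
        rw [hA', hX, Matrix.mul_add, Matrix.add_mul]
    _ = (c • A) * (c • X₁ + (-c) • X₂) := by rw [h1, h2']
  have key2 : B = A * X₁ - A * X₂ := by
    have h3 : c • (c • B) = c • (c • (A * X₁ - A * X₂)) := by
      rw [key, Matrix.smul_mul, Matrix.mul_add, Matrix.mul_smul, Matrix.mul_smul]
      simp only [neg_smul, smul_sub, smul_add, smul_neg, sub_eq_add_neg]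
    have := smul_right_injective (Matrix (Fin p × Fin 3) (Fin q × Fin 3) K) hcne
      (smul_right_injective (Matrix (Fin p × Fin 3) (Fin q × Fin 3) K) hcne h3)
    exact this
  have key3 : B = A * X₁ + A * X₂ := by rw [← hAXB, hX, Matrix.mul_add]
  have hzero : A * X₂ = 0 := by
    have h4 : A * X₂ + A * X₂ = 0 := by
      calc A * X₂ + A * X₂ = (A * X₁ + A * X₂) - (A * X₁ - A * X₂) := by abel
      _ = B - B := by rw [← key3, ← key2]
      _ = 0 := sub_self B
    have h6 : (2 : K) • (A * X₂) = 0 := by rw [two_smul]; exact h4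
    exact (smul_eq_zero.mp h6).resolve_left h2
  exact ⟨by rw [key3, hzero, add_zero], hzero⟩

lemma rho_ne_zero : kxF^2 + kyF^2 ≠ 0 := by
  have hpoly : (X 0 ^ 2 + X 1 ^ 2 : MvPolynomial (Fin 2) ℂ) ≠ 0 := by
    intro h
    have := congrArg (MvPolynomial.eval (fun j : Fin 2 => if j = 0 then 1 else 0)) h
    simp at this
  have h1 : kxF^2 + kyF^2
      = algebraMap (MvPolynomial (Fin 2) ℂ) Fld (X 0 ^ 2 + X 1 ^ 2) := by
    simp [kxF, kyF]
  rw [h1]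
  intro h
  exact hpoly (IsFractionRing.injective (MvPolynomial (Fin 2) ℂ) Fld (by simpa using h))

lemma two_ne_zero_Fld : (2 : Fld) ≠ 0 := by
  have h1 : (2 : Fld) = algebraMap (MvPolynomial (Fin 2) ℂ) Fld 2 := (map_ofNat _ 2).symm
  rw [h1]
  intro h
  have h2 : (2 : MvPolynomial (Fin 2) ℂ) = 0 :=
    IsFractionRing.injective (MvPolynomial (Fin 2) ℂ) Fld (by rw [h, map_zero])
  exact two_ne_zero h2

/-- first step of solution filtering: if `Ā ∈ R_{p×r}(F₀)`,
`B̄ ∈ R_{p×q}(F₀)`, `Ā·X̄ = B̄`, and `X̄ = X̄₁ + X̄₂` with `X̄₁ ∈ R_{r×q}(F)`,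
`X̄₂ ∈ I_{r×q}(F)`, then `Ā·X̄₁ = B̄` and `Ā·X̄₂ = 0`. -/
theorem solution_filtering_first_step (F₀ : Subfield Fld)
    (hF₀ : kxF^2 + kyF^2 ∈ F₀) (p q r : ℕ)
    (A : Matrix (Fin p × Fin 3) (Fin r × Fin 3) Fld)
    (X X₁ X₂ : Matrix (Fin r × Fin 3) (Fin q × Fin 3) Fld)
    (B : Matrix (Fin p × Fin 3) (Fin q × Fin 3) Fld)
    (hA : inBlockR F₀ A) (hB : inBlockR F₀ B)
    (hX : X = X₁ + X₂) (hX₁ : inBlockRF X₁) (hX₂ : inBlockIF X₂)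
    (hAXB : A * X = B) :
    A * X₁ = B ∧ A * X₂ = 0 := by
  obtain ⟨KA, -, hA'⟩ := hA
  obtain ⟨KB, -, hB'⟩ := hB
  obtain ⟨K1, hX₁'⟩ := hX₁
  obtain ⟨K2, hX₂'⟩ := hX₂
  exact generic_filtering kxF kyF iF rho_ne_zero two_ne_zero_Fld A X X₁ X₂ B
    KA hA' KB hB' hX K1 hX₁' K2 hX₂' hAXB

end
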